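/- arXiv:2210.07924 — 3 statements merged into one kernel-verified Lean document; each statement's English description precedes it below -/
import Mathlib

section
/- Let X1, X2, X3 be mutually independent random variables on a finite probability space and let Y be another random variable. Then I(X1, X2; Y | X3) ≤ I(X1; Y | X2, X3) + I(X2; Y | X1, X3). -/
open Finset

noncomputable def rvDist {Ω : Type*} [Fintype Ω] {A : Type*} [Fintype A] [DecidableEq A]
    (p : Ω → ℝ) (X : Ω → A) (a : A) : ℝ :=
  ∑ ω, if X ω = a then p ω else 0

noncomputable def rvEnt {Ω : Type*} [Fintype Ω] {A : Type*} [Fintype A] [DecidableEq A]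
    (p : Ω → ℝ) (X : Ω → A) : ℝ :=
  ∑ a, Real.negMulLog (rvDist p X a)

/-- Mutual information `I(X; Y)`. -/
noncomputable def rvMI {Ω : Type*} [Fintype Ω] {A B : Type*} [Fintype A] [DecidableEq A]
    [Fintype B] [DecidableEq B] (p : Ω → ℝ) (X : Ω → A) (Y : Ω → B) : ℝ :=
  rvEnt p X + rvEnt p Y - rvEnt p (fun ω => (X ω, Y ω))

/-- Conditional mutual information `I(X; Y | Z)`. -/
noncomputable def rvCMI {Ω : Type*} [Fintype Ω] {A B C : Type*} [Fintype A] [DecidableEq A]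
    [Fintype B] [DecidableEq B] [Fintype C] [DecidableEq C]
    (p : Ω → ℝ) (X : Ω → A) (Y : Ω → B) (Z : Ω → C) : ℝ :=
  rvEnt p (fun ω => (X ω, Z ω)) + rvEnt p (fun ω => (Y ω, Z ω))
    - rvEnt p (fun ω => (X ω, Y ω, Z ω)) - rvEnt p Z

section Aux

variable {Ω : Type*} [Fintype Ω] {A B C : Type*} [Fintype A] [DecidableEq A]
  [Fintype B] [DecidableEq B] [Fintype C] [DecidableEq C] (p : Ω → ℝ)

lemma rvDist_nonneg (hp : ∀ ω, 0 ≤ p ω) (X : Ω → A) (a : A) : 0 ≤ rvDist p X a :=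
  Finset.sum_nonneg fun ω _ => by by_cases h : X ω = a <;> simp [h, hp ω]

lemma sum_rvDist (X : Ω → A) : ∑ a, rvDist p X a = ∑ ω, p ω := by
  unfold rvDist
  rw [Finset.sum_comm]
  exact Finset.sum_congr rfl fun ω _ => by simp

lemma rvDist_snd (X : Ω → A) (Y : Ω → B) (b : B) :
    rvDist p Y b = ∑ a, rvDist p (fun ω => (X ω, Y ω)) (a, b) := by
  unfold rvDist
  rw [Finset.sum_comm]
  refine Finset.sum_congr rfl fun ω _ => ?_
  by_cases h : Y ω = b <;> simp [Prod.ext_iff, h]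

lemma rvDist_marg1 (X : Ω → A) (Y : Ω → B) (Z : Ω → C) (a : A) (c : C) :
    rvDist p (fun ω => (X ω, Z ω)) (a, c)
      = ∑ b, rvDist p (fun ω => (X ω, Y ω, Z ω)) (a, b, c) := by
  unfold rvDist
  rw [Finset.sum_comm]
  refine Finset.sum_congr rfl fun ω _ => ?_
  by_cases h1 : X ω = a <;> by_cases h3 : Z ω = c <;> simp [Prod.ext_iff, h1, h3]

lemma rvDist_marg2 (X : Ω → A) (Y : Ω → B) (Z : Ω → C) (b : B) (c : C) :
    rvDist p (fun ω => (Y ω, Z ω)) (b, c)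
      = ∑ a, rvDist p (fun ω => (X ω, Y ω, Z ω)) (a, b, c) := by
  unfold rvDist
  rw [Finset.sum_comm]
  refine Finset.sum_congr rfl fun ω _ => ?_
  by_cases h2 : Y ω = b <;> by_cases h3 : Z ω = c <;> simp [Prod.ext_iff, h2, h3]

lemma rvDist_congr (f : A → B) (g : B → A) (hgf : ∀ a, g (f a) = a) (X : Ω → A)
    (b : B) (hb : f (g b) = b) :
    rvDist p (fun ω => f (X ω)) b = rvDist p X (g b) := by
  unfold rvDist
  refine Finset.sum_congr rfl fun ω _ => ?_
  by_cases h : X ω = g b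
  · simp [h, hb]
  · have h' : f (X ω) ≠ b := fun he => h (by rw [← he, hgf])
    simp [h, h']

lemma rvEnt_congr (f : A → B) (g : B → A) (hgf : ∀ a, g (f a) = a) (hfg : ∀ b, f (g b) = b)
    (X : Ω → A) :
    rvEnt p (fun ω => f (X ω)) = rvEnt p X := by
  unfold rvEnt
  rw [Finset.sum_congr rfl fun b _ => by rw [rvDist_congr p f g hgf X b (hfg b)]]
  exact Equiv.sum_comp (⟨g, f, hfg, hgf⟩ : B ≃ A) fun a => Real.negMulLog (rvDist p X a)

lemma rvEnt_pair_of_indep (hsum : ∑ ω, p ω = 1) (X : Ω → A) (Y : Ω → B)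
    (h : ∀ a b, rvDist p (fun ω => (X ω, Y ω)) (a, b) = rvDist p X a * rvDist p Y b) :
    rvEnt p (fun ω => (X ω, Y ω)) = rvEnt p X + rvEnt p Y := by
  have hX : ∑ a, rvDist p X a = 1 := (sum_rvDist p X).trans hsum
  have hY : ∑ b, rvDist p Y b = 1 := (sum_rvDist p Y).trans hsum
  unfold rvEnt
  rw [Fintype.sum_prod_type]
  simp only [h, Real.negMulLog_mul, Finset.sum_add_distrib, ← Finset.mul_sum, hY, mul_one]
  rw [Finset.sum_congr rfl fun a (_ : a ∈ univ) => by rw [← Finset.sum_mul, hY, one_mul], ← Finset.sum_mul, hX,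
    one_mul]


lemma gibbs_pt {f r : ℝ} (hf : 0 ≤ f) (hr : 0 ≤ r) (h0 : r = 0 → f = 0) :
    f - r ≤ f * Real.log f - f * Real.log r := by
  rcases eq_or_lt_of_le hf with h | hfpos
  · rw [← h]; simp; linarith
  · have hrpos : 0 < r := by
      rcases eq_or_lt_of_le hr with h | h
      · exact absurd (h0 h.symm) (ne_of_gt hfpos)
      · exact h
    have hlog := Real.log_le_sub_one_of_pos (show (0:ℝ) < r / f from div_pos hrpos hfpos)
    rw [Real.log_div hrpos.ne' hfpos.ne'] at hlog
    have key : f * Real.log r - f * Real.log f ≤ r - f := by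
      calc f * Real.log r - f * Real.log f = f * (Real.log r - Real.log f) := by ring
        _ ≤ f * (r / f - 1) := mul_le_mul_of_nonneg_left hlog hfpos.le
        _ = r - f := by field_simp
    linarith

lemma rvEnt_submod (hp : ∀ ω, 0 ≤ p ω) (hsum : ∑ ω, p ω = 1)
    (X : Ω → A) (Y : Ω → B) (Z : Ω → C) :
    rvEnt p (fun ω => (X ω, Y ω, Z ω)) + rvEnt p Z
      ≤ rvEnt p (fun ω => (X ω, Z ω)) + rvEnt p (fun ω => (Y ω, Z ω)) := by
  unfold rvEnt
  set F := rvDist p (fun ω => (X ω, Y ω, Z ω)) with hF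
  set G := rvDist p (fun ω => (X ω, Z ω)) with hGdef
  set Hh := rvDist p (fun ω => (Y ω, Z ω)) with hHdef
  set K := rvDist p Z with hKdef
  have hFnn : ∀ x, 0 ≤ F x := rvDist_nonneg p hp _
  have hGnn : ∀ x, 0 ≤ G x := rvDist_nonneg p hp _
  have hHnn : ∀ x, 0 ≤ Hh x := rvDist_nonneg p hp _
  have hKnn : ∀ c, 0 ≤ K c := rvDist_nonneg p hp _
  have hG : ∀ a c, G (a, c) = ∑ b, F (a, b, c) := fun a c => rvDist_marg1 p X Y Z a c
  have hH : ∀ b c, Hh (b, c) = ∑ a, F (a, b, c) := fun b c => rvDist_marg2 p X Y Z b c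
  have hKH : ∀ c, K c = ∑ b, Hh (b, c) := fun c => rvDist_snd p Y Z c
  have hKG : ∀ c, K c = ∑ a, G (a, c) := fun c => rvDist_snd p X Z c
  have hKsum : ∑ c, K c = 1 := (sum_rvDist p Z).trans hsum
  have hFsum : ∑ x, F x = 1 := (sum_rvDist p _).trans hsum
  have hFG : ∀ a b c, F (a, b, c) ≤ G (a, c) := fun a b c => by
    rw [hG]
    exact Finset.single_le_sum (fun b _ => hFnn (a, b, c)) (Finset.mem_univ b)
  have hFH : ∀ a b c, F (a, b, c) ≤ Hh (b, c) := fun a b c => by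
    rw [hH]
    exact Finset.single_le_sum (fun a _ => hFnn (a, b, c)) (Finset.mem_univ a)
  have hHK : ∀ b c, Hh (b, c) ≤ K c := fun b c => by
    rw [hKH]
    exact Finset.single_le_sum (fun b _ => hHnn (b, c)) (Finset.mem_univ b)
  set R : A × B × C → ℝ := fun x => G (x.1, x.2.2) * Hh x.2 / K x.2.2 with hRdef
  have hRnn : ∀ x, 0 ≤ R x := fun x =>
    div_nonneg (mul_nonneg (hGnn _) (hHnn _)) (hKnn _)
  have hRsum : ∑ x, R x = 1 := by
    rw [Fintype.sum_prod_type]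
    simp_rw [Fintype.sum_prod_type]
    rw [Finset.sum_congr rfl fun a (_ : a ∈ univ) => Finset.sum_comm, Finset.sum_comm]
    rw [← hKsum]
    refine Finset.sum_congr rfl fun c _ => ?_
    show ∑ a, ∑ b, G (a, c) * Hh (b, c) / K c = K c
    simp_rw [div_eq_mul_inv]
    rw [Finset.sum_congr rfl fun a (_ : a ∈ univ) => by
        rw [← Finset.sum_mul, ← Finset.mul_sum, ← hKH]]
    rw [← Finset.sum_mul, ← Finset.sum_mul, ← hKG]
    rcases eq_or_ne (K c) 0 with h | h
    · simp [h]
    · field_simp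
  have hEG : ∑ x : A × B × C, F x * Real.log (G (x.1, x.2.2))
      = ∑ y : A × C, G y * Real.log (G y) := by
    rw [Fintype.sum_prod_type, Fintype.sum_prod_type]
    simp_rw [Fintype.sum_prod_type]
    refine Finset.sum_congr rfl fun a _ => ?_
    rw [Finset.sum_comm]
    refine Finset.sum_congr rfl fun c _ => ?_
    rw [← Finset.sum_mul, ← hG a c]
  have hEH : ∑ x : A × B × C, F x * Real.log (Hh x.2)
      = ∑ y : B × C, Hh y * Real.log (Hh y) := by
    rw [Fintype.sum_prod_type, Finset.sum_comm]
    refine Finset.sum_congr rfl fun y _ => ?_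
    obtain ⟨b, c⟩ := y
    dsimp only
    rw [← Finset.sum_mul, ← hH b c]
  have hEK : ∑ x : A × B × C, F x * Real.log (K x.2.2)
      = ∑ c, K c * Real.log (K c) := by
    rw [Fintype.sum_prod_type, Finset.sum_comm]
    rw [show ∑ y : B × C, ∑ a, F (a, y) * Real.log (K y.2)
        = ∑ y : B × C, Hh y * Real.log (K y.2) from
      Finset.sum_congr rfl fun y _ => by
        obtain ⟨b, c⟩ := y
        dsimp only
        rw [← Finset.sum_mul, ← hH b c]]
    rw [Fintype.sum_prod_type, Finset.sum_comm]
    refine Finset.sum_congr rfl fun c _ => ?_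
    dsimp only
    rw [← Finset.sum_mul, ← hKH c]
  have hS : ∀ x : A × B × C, F x - R x
      ≤ F x * Real.log (F x) + F x * Real.log (K x.2.2)
        - F x * Real.log (G (x.1, x.2.2)) - F x * Real.log (Hh x.2) := by
    intro x
    obtain ⟨a, b, c⟩ := x
    dsimp only
    rcases eq_or_lt_of_le (hFnn (a, b, c)) with h | hFpos
    · rw [← h]
      simpa using hRnn (a, b, c)
    · have hGpos : 0 < G (a, c) := lt_of_lt_of_le hFpos (hFG a b c)
      have hHpos : 0 < Hh (b, c) := lt_of_lt_of_le hFpos (hFH a b c)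
      have hKpos : 0 < K c := lt_of_lt_of_le hHpos (hHK b c)
      have hRpos : 0 < R (a, b, c) := div_pos (mul_pos hGpos hHpos) hKpos
      have hlogR : Real.log (R (a, b, c))
          = Real.log (G (a, c)) + Real.log (Hh (b, c)) - Real.log (K c) := by
        show Real.log (G (a, c) * Hh (b, c) / K c) = _
        rw [Real.log_div (mul_pos hGpos hHpos).ne' hKpos.ne',
          Real.log_mul hGpos.ne' hHpos.ne']
      have hgb := gibbs_pt hFpos.le hRpos.le (fun h => absurd h hRpos.ne')
      rw [hlogR] at hgb
      have h3 : F (a, b, c) * (Real.log (G (a, c)) + Real.log (Hh (b, c)) - Real.log (K c))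
          = F (a, b, c) * Real.log (G (a, c)) + F (a, b, c) * Real.log (Hh (b, c))
            - F (a, b, c) * Real.log (K c) := by ring
      linarith
  have hgoal : 0 ≤ ∑ x : A × B × C,
      (F x * Real.log (F x) + F x * Real.log (K x.2.2)
        - F x * Real.log (G (x.1, x.2.2)) - F x * Real.log (Hh x.2)) := by
    have : ∑ x : A × B × C, (F x - R x) ≤ _ := Finset.sum_le_sum fun x _ => hS x
    rw [Finset.sum_sub_distrib, hFsum, hRsum] at this
    linarith
  rw [Finset.sum_sub_distrib, Finset.sum_sub_distrib, Finset.sum_add_distrib] at hgoal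
  rw [hEG, hEH, hEK] at hgoal
  have eF : ∑ x : A × B × C, Real.negMulLog (F x) = -∑ x, F x * Real.log (F x) := by
    simp [Real.negMulLog, Finset.sum_neg_distrib]
  have eG : ∑ y : A × C, Real.negMulLog (G y) = -∑ y, G y * Real.log (G y) := by
    simp [Real.negMulLog, Finset.sum_neg_distrib]
  have eH : ∑ y : B × C, Real.negMulLog (Hh y) = -∑ y, Hh y * Real.log (Hh y) := by
    simp [Real.negMulLog, Finset.sum_neg_distrib]
  have eK : ∑ c, Real.negMulLog (K c) = -∑ c, K c * Real.log (K c) := by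
    simp [Real.negMulLog, Finset.sum_neg_distrib]
  linarith

end Aux

attribute [irreducible] rvDist rvEnt

set_option maxHeartbeats 1000000 in
theorem stmt0 {Ω A1 A2 A3 B : Type*} [Fintype Ω]
    [Fintype A1] [DecidableEq A1] [Fintype A2] [DecidableEq A2]
    [Fintype A3] [DecidableEq A3] [Fintype B] [DecidableEq B]
    (p : Ω → ℝ) (hp : ∀ ω, 0 ≤ p ω) (hsum : ∑ ω, p ω = 1)
    (X1 : Ω → A1) (X2 : Ω → A2) (X3 : Ω → A3) (Y : Ω → B)
    (hindep : ∀ a1 a2 a3, rvDist p (fun ω => (X1 ω, X2 ω, X3 ω)) (a1, a2, a3)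
      = rvDist p X1 a1 * rvDist p X2 a2 * rvDist p X3 a3) :
    rvCMI p (fun ω => (X1 ω, X2 ω)) Y X3
      ≤ rvCMI p X1 Y (fun ω => (X2 ω, X3 ω)) + rvCMI p X2 Y (fun ω => (X1 ω, X3 ω)) := by
  have h1sum : ∑ a, rvDist p X1 a = 1 := (sum_rvDist p X1).trans hsum
  have h2sum : ∑ a, rvDist p X2 a = 1 := (sum_rvDist p X2).trans hsum
  have d23 : ∀ a2 a3, rvDist p (fun ω => (X2 ω, X3 ω)) (a2, a3)
      = rvDist p X2 a2 * rvDist p X3 a3 := by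
    intro a2 a3
    rw [rvDist_marg2 p X1 X2 X3 a2 a3]
    simp_rw [hindep]
    rw [← Finset.sum_mul, ← Finset.sum_mul, h1sum, one_mul]
  have d13 : ∀ a1 a3, rvDist p (fun ω => (X1 ω, X3 ω)) (a1, a3)
      = rvDist p X1 a1 * rvDist p X3 a3 := by
    intro a1 a3
    rw [rvDist_marg1 p X1 X2 X3 a1 a3]
    simp_rw [hindep]
    rw [Finset.sum_congr rfl fun a2 (_ : a2 ∈ univ) =>
      show rvDist p X1 a1 * rvDist p X2 a2 * rvDist p X3 a3
        = rvDist p X2 a2 * (rvDist p X1 a1 * rvDist p X3 a3) from by ring]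
    rw [← Finset.sum_mul, h2sum, one_mul]
  have h23 : rvEnt p (fun ω => (X2 ω, X3 ω)) = rvEnt p X2 + rvEnt p X3 :=
    rvEnt_pair_of_indep p hsum X2 X3 fun a b => d23 a b
  have h13 : rvEnt p (fun ω => (X1 ω, X3 ω)) = rvEnt p X1 + rvEnt p X3 :=
    rvEnt_pair_of_indep p hsum X1 X3 fun a b => d13 a b
  have hT : rvEnt p (fun ω => (X1 ω, X2 ω, X3 ω))
      = rvEnt p X1 + (rvEnt p X2 + rvEnt p X3) := by
    rw [← h23]
    refine rvEnt_pair_of_indep p hsum X1 (fun ω => (X2 ω, X3 ω)) fun a1 y => ?_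
    obtain ⟨a2, a3⟩ := y
    rw [hindep, d23]
    ring
  -- recodings
  have c1 : rvEnt p (fun ω => ((X1 ω, X2 ω), X3 ω)) = rvEnt p (fun ω => (X1 ω, X2 ω, X3 ω)) :=
    rvEnt_congr p (fun x => ((x.1, x.2.1), x.2.2)) (fun x => (x.1.1, x.1.2, x.2))
      (fun _ => rfl) (fun _ => rfl) (fun ω => (X1 ω, X2 ω, X3 ω))
  have c2 : rvEnt p (fun ω => ((X1 ω, X2 ω), Y ω, X3 ω))
      = rvEnt p (fun ω => (X1 ω, X2 ω, Y ω, X3 ω)) :=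
    rvEnt_congr p (fun x => ((x.1, x.2.1), x.2.2)) (fun x => (x.1.1, x.1.2, x.2))
      (fun _ => rfl) (fun _ => rfl) (fun ω => (X1 ω, X2 ω, (Y ω, X3 ω)))
  have c3 : rvEnt p (fun ω => (X1 ω, Y ω, (X2 ω, X3 ω)))
      = rvEnt p (fun ω => (X1 ω, X2 ω, Y ω, X3 ω)) :=
    rvEnt_congr p (fun x => (x.1, (x.2.2.1, (x.2.1, x.2.2.2))))
      (fun x => (x.1, (x.2.2.1, (x.2.1, x.2.2.2)))) (fun _ => rfl) (fun _ => rfl)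
      (fun ω => (X1 ω, X2 ω, (Y ω, X3 ω)))
  have c4 : rvEnt p (fun ω => (X2 ω, Y ω, (X1 ω, X3 ω)))
      = rvEnt p (fun ω => (X1 ω, X2 ω, Y ω, X3 ω)) :=
    rvEnt_congr p (fun x => (x.2.1, (x.2.2.1, (x.1, x.2.2.2))))
      (fun x => (x.2.2.1, (x.1, (x.2.1, x.2.2.2)))) (fun _ => rfl) (fun _ => rfl)
      (fun ω => (X1 ω, X2 ω, (Y ω, X3 ω)))
  have c5 : rvEnt p (fun ω => (X2 ω, (X1 ω, X3 ω)))
      = rvEnt p (fun ω => (X1 ω, X2 ω, X3 ω)) :=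
    rvEnt_congr p (fun x => (x.2.1, (x.1, x.2.2))) (fun x => (x.2.1, (x.1, x.2.2)))
      (fun _ => rfl) (fun _ => rfl) (fun ω => (X1 ω, X2 ω, X3 ω))
  have c7 : rvEnt p (fun ω => (X1 ω, (Y ω, X3 ω)))
      = rvEnt p (fun ω => (Y ω, (X1 ω, X3 ω))) :=
    rvEnt_congr p (fun x => (x.2.1, (x.1, x.2.2))) (fun x => (x.2.1, (x.1, x.2.2)))
      (fun _ => rfl) (fun _ => rfl) (fun ω => (Y ω, (X1 ω, X3 ω)))
  have c8 : rvEnt p (fun ω => (X2 ω, (Y ω, X3 ω)))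
      = rvEnt p (fun ω => (Y ω, (X2 ω, X3 ω))) :=
    rvEnt_congr p (fun x => (x.2.1, (x.1, x.2.2))) (fun x => (x.2.1, (x.1, x.2.2)))
      (fun _ => rfl) (fun _ => rfl) (fun ω => (Y ω, (X2 ω, X3 ω)))
  have hsub := rvEnt_submod p hp hsum X1 X2 (fun ω => (Y ω, X3 ω))
  simp only [rvCMI]
  rw [c1, c2, c3, c4, c5, hT, h23, h13]
  rw [c7, c8] at hsub
  -- hsub : rvEnt Q + rvEnt (Y,X3) ≤ rvEnt (Y,(X1,X3)) + rvEnt (Y,(X2,X3))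
  linarith
end

section
/- Let C1, C2, C12, D1, D2, D12 be real numbers satisfying D12 ≥ D1 + D2, D1, D2 ≥ 0, C12 ≤ C1 + C2, C1 ≥ D1, C2 ≥ D2, C12 ≥ D12, C12 ≥ C1, C12 ≥ C2. Suppose reals R1s, R1o, R2s, R2o satisfy all of: R1s + R1o ≤ C1; R2s + R2o ≤ C2; R1s + R1o + R2s + R2o ≤ C12; R1s ≤ C1 − D1; R2s ≤ C2 − D2; R1s + R2s ≤ C12 − D12; R1s + R1o + R2s ≤ C12 − D2; R1s + R2s + R2o ≤ C12 − D1. Then there exist reals R1g ≥ 0 and R2g ≥ 0 such that R1s + R1o + R1g ≤ C1, R2s + R2o + R2g ≤ C2, R1s + R1o + R1g + R2s + R2o + R2g ≤ C12, R1o + R1g ≥ D1, R2o + R2g ≥ D2, and R1o + R1g + R2o + R2g ≥ D12. -/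
theorem stmt9 (C1 C2 C12 D1 D2 D12 R1s R1o R2s R2o : ℝ)
    (hD12 : D1 + D2 ≤ D12) (hD1 : 0 ≤ D1) (hD2 : 0 ≤ D2)
    (hC12 : C12 ≤ C1 + C2) (hCD1 : D1 ≤ C1) (hCD2 : D2 ≤ C2) (hCD12 : D12 ≤ C12)
    (hmono1 : C1 ≤ C12) (hmono2 : C2 ≤ C12)
    (h1 : R1s + R1o ≤ C1) (h2 : R2s + R2o ≤ C2)
    (h3 : R1s + R1o + R2s + R2o ≤ C12)
    (h4 : R1s ≤ C1 - D1) (h5 : R2s ≤ C2 - D2)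
    (h6 : R1s + R2s ≤ C12 - D12)
    (h7 : R1s + R1o + R2s ≤ C12 - D2)
    (h8 : R1s + R2s + R2o ≤ C12 - D1) :
    ∃ R1g R2g : ℝ, 0 ≤ R1g ∧ 0 ≤ R2g ∧
      R1s + R1o + R1g ≤ C1 ∧ R2s + R2o + R2g ≤ C2 ∧
      R1s + R1o + R1g + R2s + R2o + R2g ≤ C12 ∧
      D1 ≤ R1o + R1g ∧ D2 ≤ R2o + R2g ∧
      D12 ≤ R1o + R1g + R2o + R2g := by
  set g1 : ℝ := max (max 0 (D1 - R1o)) (D12 - R1o - R2o - (C2 - R2s - R2o)) with hg1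
  set g2 : ℝ := max (max 0 (D2 - R2o)) (D12 - R1o - R2o - g1) with hg2
  have hg1nn : 0 ≤ g1 := le_max_of_le_left (le_max_left _ _)
  have hg1B1 : D1 - R1o ≤ g1 := le_max_of_le_left (le_max_right _ _)
  have hg1B12 : D12 - R1o - R2o - (C2 - R2s - R2o) ≤ g1 := le_max_right _ _
  have hg1A1 : g1 ≤ C1 - R1s - R1o := by
    apply max_le (max_le (by linarith) (by linarith)) (by linarith)
  have hg2nn : 0 ≤ g2 := le_max_of_le_left (le_max_left _ _)
  have hg2B2 : D2 - R2o ≤ g2 := le_max_of_le_left (le_max_right _ _)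
  have hg2B12 : D12 - R1o - R2o - g1 ≤ g2 := le_max_right _ _
  have hg2A2 : g2 ≤ C2 - R2s - R2o := by
    apply max_le (max_le (by linarith) (by linarith)) (by linarith)
  have hsum : g1 + g2 ≤ C12 - (R1s + R1o + R2s + R2o) := by
    rw [hg2]
    rcases max_cases (max 0 (D2 - R2o)) (D12 - R1o - R2o - g1) with ⟨he, _⟩ | ⟨he, _⟩
    · rw [he]
      rcases max_cases (0:ℝ) (D2 - R2o) with ⟨he2, _⟩ | ⟨he2, _⟩ <;> rw [he2]
      · have : g1 ≤ C12 - (R1s + R1o + R2s + R2o) := by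
          rw [hg1]
          exact max_le (max_le (by linarith) (by linarith)) (by linarith)
        linarith
      · rcases max_cases (max 0 (D1 - R1o)) (D12 - R1o - R2o - (C2 - R2s - R2o)) with ⟨he3, _⟩ | ⟨he3, _⟩
        · rw [hg1, he3]
          rcases max_cases (0:ℝ) (D1 - R1o) with ⟨he4, _⟩ | ⟨he4, _⟩ <;> rw [he4] <;> linarith
        · rw [hg1, he3]; linarith
    · rw [he]; linarith
  exact ⟨g1, g2, hg1nn, hg2nn, by linarith, by linarith, by linarith, by linarith, by linarith, by linarith⟩
end

section
/- For all subsets S of {1,2} let C_S, D_S be reals with C_∅ = D_∅ = 0, D_{12} ≥ D_1 + D_2 ≥ 0, C_{12} ≤ C_1 + C_2, and C_S ≥ D_S for all S. Then the polyhedron in variables (R1g, R2g) defined by R1g ≥ 0, R2g ≥ 0, R1s + R1o + R1g ≤ C_1, R2s + R2o + R2g ≤ C_2, (R1s + R1o + R1g) + (R2s + R2o + R2g) ≤ C_{12}, R1o + R1g ≥ D_1, R2o + R2g ≥ D_2, (R1o + R1g) + (R2o + R2g) ≥ D_{12} is nonempty if and only if the eight projected inequalities hold: R1s + R1o ≤ C_1;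 R2s + R2o ≤ C_2; R1s + R1o + R2s + R2o ≤ C_{12}; R1s ≤ C_1 − D_1; R2s ≤ C_2 − D_2; R1s + R2s ≤ C_{12} − D_{12}; R1s + R1o + R2s ≤ C_{12} − D_2; R1s + R2s + R2o ≤ C_{12} − D_1. -/
open Finset

lemma fm2 (l1 l2 l12 u1 u2 u12 : ℝ) (h1 : l1 ≤ u1) (h2 : l2 ≤ u2)
    (h3 : l12 ≤ u12) (h4 : l1 + l2 ≤ u12) (h5 : l12 ≤ u1 + u2) :
    ∃ x y : ℝ, l1 ≤ x ∧ x ≤ u1 ∧ l2 ≤ y ∧ y ≤ u2 ∧ l12 ≤ x + y ∧ x + y ≤ u12 := by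
  rcases le_total l12 (l1 + l2) with h | h
  · exact ⟨l1, l2, le_refl _, h1, le_refl _, h2, h, h4⟩
  · rcases le_total (l12 - l1) u2 with h' | h'
    · exact ⟨l1, l12 - l1, le_refl _, h1, by linarith, h', by linarith, by linarith⟩
    · exact ⟨l12 - u2, u2, by linarith, by linarith, h2, le_refl _, by linarith, by linarith⟩

theorem stmt19 (C D : Finset (Fin 2) → ℝ) (R1s R1o R2s R2o : ℝ)
    (hC0 : C ∅ = 0) (hD0 : D ∅ = 0)
    (hDsuper : D {0} + D {1} ≤ D {0, 1}) (hDpos : 0 ≤ D {0} + D {1})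
    (hCsub : C {0, 1} ≤ C {0} + C {1})
    (hCD : ∀ S : Finset (Fin 2), D S ≤ C S) :
    (∃ R1g R2g : ℝ, 0 ≤ R1g ∧ 0 ≤ R2g ∧
        R1s + R1o + R1g ≤ C {0} ∧ R2s + R2o + R2g ≤ C {1} ∧
        (R1s + R1o + R1g) + (R2s + R2o + R2g) ≤ C {0, 1} ∧
        D {0} ≤ R1o + R1g ∧ D {1} ≤ R2o + R2g ∧
        D {0, 1} ≤ (R1o + R1g) + (R2o + R2g)) ↔
      (R1s + R1o ≤ C {0} ∧ R2s + R2o ≤ C {1} ∧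
        R1s + R1o + R2s + R2o ≤ C {0, 1} ∧
        R1s ≤ C {0} - D {0} ∧ R2s ≤ C {1} - D {1} ∧
        R1s + R2s ≤ C {0, 1} - D {0, 1} ∧
        R1s + R1o + R2s ≤ C {0, 1} - D {1} ∧
        R1s + R2s + R2o ≤ C {0, 1} - D {0}) := by
  constructor
  · rintro ⟨g1, g2, hg1, hg2, hc1, hc2, hc12, hd1, hd2, hd12⟩
    refine ⟨by linarith, by linarith, by linarith, by linarith, by linarith,
      by linarith, by linarith, by linarith⟩
  · rintro ⟨h1, h2, h3, h4, h5, h6, h7, h8⟩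
    have hd1 : 0 ≤ D {0} + D {1} := hDpos
    -- lower and upper bounds for the generic lemma
    have key := fm2 (max 0 (D {0} - R1o)) (max 0 (D {1} - R2o))
      (D {0, 1} - R1o - R2o) (C {0} - R1s - R1o) (C {1} - R2s - R2o)
      (C {0, 1} - R1s - R1o - R2s - R2o)
      (max_le (by linarith) (by linarith))
      (max_le (by linarith) (by linarith))
      (by linarith)
      (by
        rcases max_cases (0 : ℝ) (D {0} - R1o) with ⟨e1, _⟩ | ⟨e1, _⟩ <;>
          rcases max_cases (0 : ℝ) (D {1} - R2o) with ⟨e2, _⟩ | ⟨e2, _⟩ <;>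
          rw [e1, e2] <;> linarith)
      (by linarith)
    obtain ⟨x, y, hx1, hx2, hy1, hy2, hs1, hs2⟩ := key
    have hx0 : (0 : ℝ) ≤ x := le_trans (le_max_left _ _) hx1
    have hy0 : (0 : ℝ) ≤ y := le_trans (le_max_left _ _) hy1
    have hxd : D {0} - R1o ≤ x := le_trans (le_max_right _ _) hx1
    have hyd : D {1} - R2o ≤ y := le_trans (le_max_right _ _) hy1
    exact ⟨x, y, hx0, hy0, by linarith, by linarith, by linarith,
      by linarith, by linarith, by linarith⟩
end
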